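/- arXiv:2403.15527 — 2 statements merged into one kernel-verified Lean document; each statement's English description precedes it below -/
import Mathlib

section
/- Proposition 2 (total Lebesgue measure of AdaHedge-weighted majority vote sets): Let K ≥ 2 and T ≥ 1. For each t = 1, …, T let C_1^{(t)}, …, C_K^{(t)} be Lebesgue-measurable subsets of ℝ of finite Lebesgue measure, and set the expert losses to ℓ_k^{(t)} = λ(C_k^{(t)}). Let w^{(t)} be the AdaHedge weights (defined in the context) for these losses, and let C^{(t)} := {y ∈ ℝ : ∑_{k=1}^K w_k^{(t)}·1{y ∈ C_k^{(t)}} > 1/2} be the round-t weighted majority vote set, with L_M^{(T)} = ∑_{t=1}^T λ(C^{(t)}). With L_*^{(T)} = min_k L_k^{(T)}, L_+^{(T)} = ∑_{t=1}^T max_k ℓ_k^{(t)}, L_−^{(T)} = ∑_{t=1}^T min_k ℓ_k^{(t)}, s^{(t)} = max_k ℓ_k^{(t)} − min_k ℓ_k^{(t)} and S^{(T)} = max_{1≤t≤T} s^{(t)}, it holds that L_M^{(T)} ≤ 2·L_*^{(T)} + 4·( S^{(T)}·(ln K)·(L_+^{(T)} − L_*^{(T)})·(L_*^{(T)} − L_−^{(T)})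 / (L_+^{(T)} − L_−^{(T)}) )^{1/2} + 2·S^{(T)}·((16/3)·ln K + 2), where the fraction is interpreted as 0 when L_+^{(T)} = L_−^{(T)}. -/
/-!
Markov's inequality bounds each majority vote set by twice the hedge loss of its round, so it
suffices to bound the cumulative AdaHedge loss `H`. The mix losses telescope in a softmin
potential that is monotone in `Δ`, whence `∑ₜ m⁽ᵗ⁾ ≤ L_* + Δ_T` and `H ≤ L_* + 2 Δ_T`.
Bernstein's inequality for each mixability gap gives `Δ_T² ≤ ln K · V + (2/3 ln K + 1) S Δ_T`,
where `V` is the cumulative variance of the losses under the weights. The Bhatia–Davis and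
Sedrakyan inequalities bound `V` by `S (H - L_-)(L_+ - H)/(L_+ - L_-) ≤ S (B + 2 Δ_T)` with
`B = (L_+ - L_*)(L_* - L_-)/(L_+ - L_-)`, and solving the resulting quadratic inequality gives
`Δ_T ≤ √(S ln K B) + (8/3 ln K + 1) S`.
-/

open Finset

/-- Cumulative loss of expert `k` after `t` rounds: `L_k^{(t)} = ∑_{s<t} ℓ_k^{(s)}`. -/
noncomputable def cumLoss (K : ℕ) (l : ℕ → Fin K → ℝ) (t : ℕ) (k : Fin K) : ℝ :=
  ∑ s ∈ Finset.range t, l s k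

/- AdaHedge weights in round `t`, given the cumulative mixability gap `Δ` so far.
If `Δ > 0`, these are the exponential weights with learning rate `η = ln K / Δ`;
if `Δ ≤ 0` (i.e. `Δ = 0`, corresponding to `η = ∞`), the weight is uniform on the
set of minimizers of the cumulative loss. -/
open Classical in
noncomputable def ahWeight (K : ℕ) (l : ℕ → Fin K → ℝ) (Δ : ℝ) (t : ℕ) (k : Fin K) : ℝ :=
  if 0 < Δ then
    Real.exp (-(Real.log K / Δ) * cumLoss K l t k) /
      ∑ j : Fin K, Real.exp (-(Real.log K / Δ) * cumLoss K l t j)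
  else
    if cumLoss K l t k = ⨅ j, cumLoss K l t j then
      1 / ((Finset.univ.filter fun j : Fin K =>
        cumLoss K l t j = ⨅ j', cumLoss K l t j').card : ℝ)
    else 0

/-- Hedge loss in round `t`: `h^{(t)} = ∑ k, w_k^{(t)} ℓ_k^{(t)}`. -/
noncomputable def ahHedgeLoss (K : ℕ) (l : ℕ → Fin K → ℝ) (Δ : ℝ) (t : ℕ) : ℝ :=
  ∑ k : Fin K, ahWeight K l Δ t k * l t k

/-- Mix loss in round `t`: `m^{(t)} = −(1/η)·ln(∑ k, w_k^{(t)} exp(−η ℓ_k^{(t)}))`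
with `η = ln K / Δ` when `Δ > 0`, and `min_k L_k^{(t)} − min_k L_k^{(t−1)}` when
`Δ = 0` (corresponding to `η = ∞`). -/
noncomputable def ahMixLoss (K : ℕ) (l : ℕ → Fin K → ℝ) (Δ : ℝ) (t : ℕ) : ℝ :=
  if 0 < Δ then
    -(Δ / Real.log K) *
      Real.log (∑ k : Fin K, ahWeight K l Δ t k * Real.exp (-(Real.log K / Δ) * l t k))
  else (⨅ k, cumLoss K l (t + 1) k) - ⨅ k, cumLoss K l t k

/-- The AdaHedge cumulative mixability gap: `Δ^{(0)} = 0` and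
`Δ^{(t+1)} = Δ^{(t)} + (h^{(t)} − m^{(t)})`. -/
noncomputable def ahDelta (K : ℕ) (l : ℕ → Fin K → ℝ) : ℕ → ℝ
  | 0 => 0
  | t + 1 =>
    ahDelta K l t +
      (ahHedgeLoss K l (ahDelta K l t) t - ahMixLoss K l (ahDelta K l t) t)

open Real MeasureTheory

section ExpInequalities

lemma nonneg_of_hasDerivAt_nonneg {f f' : ℝ → ℝ} (hf : ∀ x, HasDerivAt f (f' x) x)
    (hf' : ∀ x, 0 ≤ x → 0 ≤ f' x) (h0 : f 0 = 0) {x : ℝ} (hx : 0 ≤ x) : 0 ≤ f x := by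
  have hmono : MonotoneOn f (Set.Ici 0) :=
    monotoneOn_of_hasDerivWithinAt_nonneg (convex_Ici 0)
      (fun y _ => (hf y).continuousAt.continuousWithinAt)
      (fun y _ => (hf y).hasDerivWithinAt) (fun y hy => hf' y (interior_subset hy))
  simpa [h0] using hmono Set.self_mem_Ici hx hx

lemma one_sub_mul_exp_le_one (x : ℝ) : (1 - x) * exp x ≤ 1 := by
  have := mul_le_mul_of_nonneg_right (add_one_le_exp (-x)) (exp_pos x).le
  rwa [← exp_add, neg_add_cancel, exp_zero, neg_add_eq_sub] at this

lemma sub_two_mul_exp_add_add_two_nonneg {x : ℝ} (hx : 0 ≤ x) :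
    0 ≤ (x - 2) * exp x + (x + 2) := by
  refine nonneg_of_hasDerivAt_nonneg (f := fun x => (x - 2) * exp x + (x + 2))
    (f' := fun x => (x - 1) * exp x + 1) (fun x => ?_)
    (fun x _ => by nlinarith [one_sub_mul_exp_le_one x]) (by simp) hx
  exact ((((hasDerivAt_id' x).sub_const 2).mul (hasDerivAt_exp x)).add
    ((hasDerivAt_id' x).add_const 2)).congr_deriv (by ring)

lemma exp_le_one_add_add_sq_div_two_of_nonpos {y : ℝ} (hy : y ≤ 0) : exp y ≤ 1 + y + y ^ 2 / 2 := by
  have key := nonneg_of_hasDerivAt_nonneg (f := fun x => 1 - x + x ^ 2 / 2 - exp (-x))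
    (f' := fun x => -1 + x + exp (-x)) (fun x => ?_)
    (fun x _ => by linarith [add_one_le_exp (-x)]) (by simp) (neg_nonneg.2 hy)
  · simp only [neg_neg] at key
    linarith
  · have := (((hasDerivAt_id' x).const_sub 1).add ((hasDerivAt_pow 2 x).div_const 2)).sub
      ((hasDerivAt_neg x).exp)
    exact this.congr_deriv (by ring)

lemma monotoneOn_exp_sub_sub_one_div_sq :
    MonotoneOn (fun x => (exp x - x - 1) / x ^ 2) (Set.Ioi 0) := by
  have hder : ∀ x : ℝ, x ≠ 0 → HasDerivAt (fun x => (exp x - x - 1) / x ^ 2)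
      (x * ((x - 2) * exp x + (x + 2)) / (x ^ 2) ^ 2) x := by
    intro x hx
    exact ((((hasDerivAt_exp x).sub (hasDerivAt_id' x)).sub_const 1).div
      (hasDerivAt_pow 2 x) (pow_ne_zero 2 hx)).congr_deriv (by simp only [Pi.sub_apply]; ring)
  refine monotoneOn_of_hasDerivWithinAt_nonneg (convex_Ioi 0)
    (fun x hx => (hder x (ne_of_gt hx)).continuousAt.continuousWithinAt)
    (fun x hx => (hder x (ne_of_gt (interior_subset hx))).hasDerivWithinAt) fun x hx => ?_
  rw [interior_Ioi] at hx
  exact div_nonneg (mul_nonneg (le_of_lt hx) (sub_two_mul_exp_add_add_two_nonneg (le_of_lt hx)))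
    (by positivity)

/-- `exp y ≤ 1 + y + ψ(b) y²` for `y ≤ b`, where `ψ(b) = (exp b - b - 1) / b²`, cleared of
denominators. -/
lemma exp_sub_sub_one_mul_sq_le {y b : ℝ} (hb : 0 < b) (hyb : y ≤ b) :
    (exp y - y - 1) * b ^ 2 ≤ (exp b - b - 1) * y ^ 2 := by
  rcases le_or_gt y 0 with hy | hy
  · have h1 := exp_le_one_add_add_sq_div_two_of_nonpos hy
    have h2 := quadratic_le_exp_of_nonneg hb.le
    nlinarith [mul_le_mul_of_nonneg_right h1 (sq_nonneg b),
      mul_le_mul_of_nonneg_left h2 (sq_nonneg y)]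
  · have := monotoneOn_exp_sub_sub_one_div_sq hy (lt_of_lt_of_le hy hyb) hyb
    rwa [div_le_div_iff₀ (by positivity) (by positivity)] at this

lemma two_sub_mul_exp_sub_sub_one_le_sq {x : ℝ} (hx : 0 ≤ x) :
    (2 - 2 / 3 * x) * (exp x - x - 1) ≤ x ^ 2 := by
  have key := nonneg_of_hasDerivAt_nonneg
    (f := fun x => x ^ 2 - (2 - 2 / 3 * x) * (exp x - x - 1))
    (f' := fun x => 2 / 3 * ((x - 2) * exp x + (x + 2))) (fun x => ?_)
    (fun x hx => by have := sub_two_mul_exp_add_add_two_nonneg hx; positivity) (by simp) hx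
  · linarith
  · exact ((hasDerivAt_pow 2 x).sub ((((hasDerivAt_id' x).const_mul (2 / 3)).const_sub 2).mul
      (((hasDerivAt_exp x).sub (hasDerivAt_id' x)).sub_const 1))).congr_deriv
      (by simp only [Pi.sub_apply]; ring)

end ExpInequalities

lemma le_add_of_sq_le_sq_add_mul {D X d : ℝ} (hX : 0 ≤ X) (hd : 0 ≤ d)
    (h : D ^ 2 ≤ X ^ 2 + d * D) : D ≤ X + d := by
  nlinarith

lemma mul_sub_le_mul_div {a c S : ℝ} (ha : 0 ≤ a) (hac : a ≤ c) (hcS : c ≤ S) :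
    a * (c - a) ≤ S * (a * (c - a) / c) := by
  rcases (ha.trans hac).eq_or_lt with hc | hc
  · simp [← hc, le_antisymm (hc ▸ hac) ha]
  · calc a * (c - a) = c * (a * (c - a) / c) := by field_simp
      _ ≤ S * (a * (c - a) / c) :=
        mul_le_mul_of_nonneg_right hcS (div_nonneg (mul_nonneg ha (by linarith)) hc.le)

lemma sub_mul_sub_div_le {a b c x : ℝ} (hab : a ≤ b) (hac : a ≤ c) (hcx : c ≤ x) :
    (x - a) * (b - x) / (b - a) ≤ (b - c) * (c - a) / (b - a) + (x - c) := by
  rcases hab.eq_or_lt with rfl | hab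
  · simpa using hcx
  rw [div_add' _ _ _ (by linarith), div_le_div_iff_of_pos_right (by linarith)]
  nlinarith [mul_nonneg (sub_nonneg.2 hcx) (by linarith : 0 ≤ x + c - 2 * a)]

/-- A form of Sedrakyan's lemma that allows vanishing denominators. -/
lemma sum_mul_sub_div_le {ι : Type*} (s : Finset ι) {a c : ι → ℝ} (ha : ∀ i ∈ s, 0 ≤ a i)
    (hac : ∀ i ∈ s, a i ≤ c i) :
    ∑ i ∈ s, a i * (c i - a i) / c i ≤
      (∑ i ∈ s, a i) * (∑ i ∈ s, c i - ∑ i ∈ s, a i) / ∑ i ∈ s, c i := by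
  have hc : ∀ i ∈ s, 0 ≤ c i := fun i hi => (ha i hi).trans (hac i hi)
  have ha0 : ∀ i ∈ s, c i = 0 → a i = 0 := fun i hi h => le_antisymm (h ▸ hac i hi) (ha i hi)
  rcases (sum_nonneg hc).eq_or_lt with hC | hC
  · have hc0 := (sum_eq_zero_iff_of_nonneg hc).1 hC.symm
    rw [← hC, div_zero]
    exact (sum_eq_zero fun i hi => by simp [hc0 i hi]).le
  have hterm : ∀ i ∈ s, a i * (c i - a i) / c i = a i - a i ^ 2 / c i := fun i hi => by
    rcases (hc i hi).eq_or_lt with h | h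
    · simp [← h, ha0 i hi h.symm]
    · field_simp
  have hcs : (∑ i ∈ s, a i) ^ 2 ≤ (∑ i ∈ s, a i ^ 2 / c i) * ∑ i ∈ s, c i :=
    sum_sq_le_sum_mul_sum_of_sq_le_mul s (fun i hi => div_nonneg (sq_nonneg _) (hc i hi)) hc
      fun i hi => by
        rcases (hc i hi).eq_or_lt with h | h
        · simp [← h, ha0 i hi h.symm]
        · rw [div_mul_cancel₀ _ h.ne']
  rw [sum_congr rfl hterm, sum_sub_distrib, mul_sub, sub_div, mul_div_assoc, div_self hC.ne',
    mul_one, ← sq, sub_le_sub_iff_left, div_le_iff₀ hC]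
  exact hcs

section WeightedMean

variable {ι : Type*} [Fintype ι] {w x : ι → ℝ}

lemma sum_mul_le_of_mem_stdSimplex (hw : w ∈ stdSimplex ℝ ι) {c : ℝ} (h : ∀ k, x k ≤ c) :
    ∑ k, w k * x k ≤ c :=
  calc ∑ k, w k * x k ≤ ∑ k, w k * c :=
        sum_le_sum fun k _ => mul_le_mul_of_nonneg_left (h k) (hw.1 k)
    _ = c := by rw [← sum_mul, hw.2, one_mul]

lemma le_sum_mul_of_mem_stdSimplex (hw : w ∈ stdSimplex ℝ ι) {c : ℝ} (h : ∀ k, c ≤ x k) :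
    c ≤ ∑ k, w k * x k :=
  calc c = ∑ k, w k * c := by rw [← sum_mul, hw.2, one_mul]
    _ ≤ ∑ k, w k * x k := sum_le_sum fun k _ => mul_le_mul_of_nonneg_left (h k) (hw.1 k)

lemma sum_mul_sub_sum_mul_eq_zero (hw : w ∈ stdSimplex ℝ ι) :
    ∑ k, w k * (x k - ∑ j, w j * x j) = 0 := by
  simp only [mul_sub, sum_sub_distrib, ← sum_mul, hw.2, one_mul, sub_self]

lemma sum_mul_exp_pos (hw : w ∈ stdSimplex ℝ ι) (f : ι → ℝ) : 0 < ∑ k, w k * exp (f k) := by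
  obtain ⟨k, -, hk⟩ := exists_lt_of_sum_lt (s := univ) (f := 0) (g := w) (by simp [hw.2])
  exact sum_pos' (fun j _ => mul_nonneg (hw.1 j) (exp_pos _).le)
    ⟨k, mem_univ k, mul_pos hk (exp_pos _)⟩

/-- The Bhatia–Davis inequality. -/
lemma sum_mul_sub_sq_le (hw : w ∈ stdSimplex ℝ ι) {a b : ℝ} (ha : ∀ k, a ≤ x k)
    (hb : ∀ k, x k ≤ b) :
    ∑ k, w k * (x k - ∑ j, w j * x j) ^ 2 ≤
      (b - ∑ j, w j * x j) * (∑ j, w j * x j - a) := by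
  set m := ∑ j, w j * x j
  have hprod : 0 ≤ ∑ k, w k * ((b - x k) * (x k - a)) := sum_nonneg fun k _ =>
    mul_nonneg (hw.1 k) (mul_nonneg (sub_nonneg.2 (hb k)) (sub_nonneg.2 (ha k)))
  have hsplit : ∑ k, w k * (x k - m) ^ 2 + ∑ k, w k * ((b - x k) * (x k - a)) =
      (b - m) * (m - a) + (a + b - 2 * m) * ∑ k, w k * (x k - m) := by
    have hc : (b - m) * (m - a) = ∑ k, w k * ((b - m) * (m - a)) := by
      rw [← sum_mul, hw.2, one_mul]
    rw [hc, mul_sum, ← sum_add_distrib, ← sum_add_distrib]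
    exact sum_congr rfl fun k _ => by ring
  rw [sum_mul_sub_sum_mul_eq_zero hw, mul_zero, add_zero] at hsplit
  linarith

lemma sum_mul_exp_sub_one_mul_sq_le (hw : w ∈ stdSimplex ℝ ι) {b : ℝ} (hb : 0 < b)
    (hx0 : ∑ k, w k * x k = 0) (hxb : ∀ k, x k ≤ b) :
    (∑ k, w k * exp (x k) - 1) * b ^ 2 ≤ (exp b - b - 1) * ∑ k, w k * x k ^ 2 := by
  have hsum := sum_le_sum fun k (_ : k ∈ univ) =>
    mul_le_mul_of_nonneg_left (exp_sub_sub_one_mul_sq_le hb (hxb k)) (hw.1 k)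
  have hl : ∑ k, w k * ((exp (x k) - x k - 1) * b ^ 2) =
      (∑ k, w k * exp (x k) - ∑ k, w k * x k - ∑ k, w k) * b ^ 2 := by
    rw [sub_mul, sub_mul, sum_mul, sum_mul, sum_mul, ← sum_sub_distrib, ← sum_sub_distrib]
    exact sum_congr rfl fun k _ => by ring
  rw [hl, hx0, hw.2, sub_zero] at hsum
  rw [mul_sum]
  exact hsum.trans_eq (sum_congr rfl fun k _ => by ring)

end WeightedMean

section MixLoss

variable {ι : Type*} [Fintype ι] {w x : ι → ℝ} {η : ℝ}

noncomputable def mixLoss (w : ι → ℝ) (η : ℝ) (x : ι → ℝ) : ℝ :=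
  -η⁻¹ * log (∑ k, w k * exp (-η * x k))

lemma mixLoss_le_iff (hη : 0 < η) {c : ℝ} :
    mixLoss w η x ≤ c ↔ -(η * c) ≤ log (∑ k, w k * exp (-η * x k)) := by
  rw [mixLoss, neg_mul, neg_le, le_inv_mul_iff₀ hη, mul_neg]

lemma le_mixLoss_iff (hη : 0 < η) {c : ℝ} :
    c ≤ mixLoss w η x ↔ log (∑ k, w k * exp (-η * x k)) ≤ -(η * c) := by
  rw [mixLoss, neg_mul, le_neg, inv_mul_le_iff₀ hη, mul_neg]

lemma mixLoss_zero (hw : w ∈ stdSimplex ℝ ι) : mixLoss w η 0 = 0 := by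
  simp [mixLoss, hw.2]

lemma mixLoss_le_sum_mul (hw : w ∈ stdSimplex ℝ ι) (hη : 0 < η) :
    mixLoss w η x ≤ ∑ k, w k * x k := by
  have hjensen : exp (∑ k, w k • (-η * x k)) ≤ ∑ k, w k • exp (-η * x k) :=
    convexOn_exp.map_sum_le (fun k _ => hw.1 k) hw.2 fun k _ => Set.mem_univ _
  have hsum : ∑ k, w k • (-η * x k) = -(η * ∑ k, w k * x k) := by
    rw [mul_sum, ← sum_neg_distrib]; exact sum_congr rfl fun k _ => by rw [smul_eq_mul]; ring
  rw [hsum] at hjensen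
  simp only [smul_eq_mul] at hjensen
  exact (mixLoss_le_iff hη).2 ((le_log_iff_exp_le (sum_mul_exp_pos hw _)).2 hjensen)

lemma le_mixLoss (hw : w ∈ stdSimplex ℝ ι) (hη : 0 < η) {c : ℝ} (h : ∀ k, c ≤ x k) :
    c ≤ mixLoss w η x := by
  have hle : ∑ k, w k * exp (-η * x k) ≤ exp (-(η * c)) :=
    sum_mul_le_of_mem_stdSimplex hw fun k => exp_le_exp.2 (by nlinarith [h k])
  exact (le_mixLoss_iff hη).2 ((log_le_iff_le_exp (sum_mul_exp_pos hw _)).2 hle)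

lemma mixLoss_le_sub_log_div (hw : w ∈ stdSimplex ℝ ι) (hη : 0 < η) {k : ι} (hk : 0 < w k) :
    mixLoss w η x ≤ x k - log (w k) / η := by
  have hle : w k * exp (-η * x k) ≤ ∑ j, w j * exp (-η * x j) :=
    single_le_sum (f := fun j => w j * exp (-η * x j))
      (fun j _ => mul_nonneg (hw.1 j) (exp_pos _).le) (mem_univ k)
  have := log_le_log (by positivity) hle
  rw [log_mul hk.ne' (exp_pos _).ne', log_exp] at this
  rw [mixLoss_le_iff hη, mul_sub, mul_div_cancel₀ _ hη.ne']
  linarith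

lemma log_sum_mul_exp_mul_sub (hw : w ∈ stdSimplex ℝ ι) (hη : η ≠ 0) (c : ℝ) :
    log (∑ k, w k * exp (η * (c - x k))) = η * (c - mixLoss w η x) := by
  have : ∑ k, w k * exp (η * (c - x k)) = exp (η * c) * ∑ k, w k * exp (-η * x k) := by
    rw [mul_sum]; exact sum_congr rfl fun k _ => by rw [mul_left_comm, ← exp_add]; ring_nf
  rw [this, log_mul (exp_pos _).ne' (sum_mul_exp_pos hw _).ne', log_exp, mixLoss]
  field_simp
  ring

/-- The power mean inequality. -/
lemma mixLoss_antitone (hw : w ∈ stdSimplex ℝ ι) {η η' : ℝ} (hη : 0 < η) (hηη' : η ≤ η') :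
    mixLoss w η' x ≤ mixLoss w η x := by
  have hη' : 0 < η' := hη.trans_le hηη'
  have hp : 1 ≤ η' / η := (one_le_div hη).2 hηη'
  have hpow : ∀ k, exp (-η * x k) ^ (η' / η) = exp (-η' * x k) := fun k => by
    rw [← exp_mul]; congr 1; field_simp
  have hjensen : (∑ k, w k • exp (-η * x k)) ^ (η' / η) ≤
      ∑ k, w k • exp (-η * x k) ^ (η' / η) :=
    (convexOn_rpow hp).map_sum_le (fun k _ => hw.1 k) hw.2 fun k _ => (exp_pos _).le
  simp only [smul_eq_mul, hpow] at hjensen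
  have hZ := sum_mul_exp_pos hw fun k => -η * x k
  have hlog := log_le_log (rpow_pos_of_pos hZ _) hjensen
  rw [log_rpow hZ] at hlog
  rw [mixLoss_le_iff hη']
  calc -(η' * mixLoss w η x) = η' / η * log (∑ k, w k * exp (-η * x k)) := by
        rw [mixLoss]; field_simp
    _ ≤ _ := hlog

/-- Bernstein's inequality for the mixability gap. -/
theorem two_mul_sub_mixLoss_le (hw : w ∈ stdSimplex ℝ ι) (hη : 0 < η) {a s : ℝ}
    (ha : ∀ k, a ≤ x k) (hs : ∀ k, x k ≤ a + s) :
    2 * (∑ k, w k * x k - mixLoss w η x) ≤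
      η * (∑ k, w k * (x k - ∑ j, w j * x j) ^ 2 +
        2 / 3 * s * (∑ k, w k * x k - mixLoss w η x)) := by
  set h := ∑ k, w k * x k
  set δ := h - mixLoss w η x
  set v := ∑ k, w k * (x k - h) ^ 2
  have hδ0 : 0 ≤ δ := sub_nonneg.2 (mixLoss_le_sum_mul hw hη)
  have hv0 : 0 ≤ v := sum_nonneg fun k _ => mul_nonneg (hw.1 k) (sq_nonneg _)
  have hh : h ≤ a + s := sum_mul_le_of_mem_stdSimplex hw hs
  have hδs : δ ≤ s := by linarith [le_mixLoss hw hη ha]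
  rcases (hδ0.trans hδs).eq_or_lt with rfl | hs0
  · rw [le_antisymm hδs hδ0]; nlinarith [mul_nonneg hη.le hv0]
  set b := η * s
  have hb : 0 < b := mul_pos hη hs0
  set Z := ∑ k, w k * exp (η * (h - x k))
  have hZ : 0 < Z := sum_mul_exp_pos hw _
  have hlog : log Z = η * δ := log_sum_mul_exp_mul_sub hw hη.ne' h
  have hbern : (Z - 1) * b ^ 2 ≤ (exp b - b - 1) * (η ^ 2 * v) := by
    have hY : ∑ k, w k * (η * (h - x k)) = 0 :=
      calc ∑ k, w k * (η * (h - x k)) = -η * ∑ k, w k * (x k - h) := by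
            rw [mul_sum]; exact sum_congr rfl fun k _ => by ring
        _ = 0 := by rw [sum_mul_sub_sum_mul_eq_zero hw, mul_zero]
    have hYsq : ∑ k, w k * (η * (h - x k)) ^ 2 = η ^ 2 * v := by
      rw [mul_sum]; exact sum_congr rfl fun k _ => by ring
    rw [← hYsq]
    exact sum_mul_exp_sub_one_mul_sq_le hw hb hY fun k =>
      mul_le_mul_of_nonneg_left (by linarith [ha k]) hη.le
  have hηδ : η * δ ≤ Z - 1 := hlog ▸ log_le_sub_one_of_pos hZ
  have hE : 0 < exp b - b - 1 := by linarith [add_one_lt_exp hb.ne']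
  -- `δ ≤ ψ(b) η v` with `ψ(b) = (exp b - b - 1) / b²`, and `(2 - 2b/3) ψ(b) ≤ 1`
  have hδb : δ * b ^ 2 ≤ (exp b - b - 1) * (η * v) := by
    refine le_of_mul_le_mul_left ?_ hη
    nlinarith [mul_le_mul_of_nonneg_right hηδ (sq_nonneg b)]
  have hgap : (2 - 2 / 3 * b) * δ ≤ η * v := by
    refine le_of_mul_le_mul_right ?_ hE
    nlinarith [mul_le_mul_of_nonneg_right (two_sub_mul_exp_sub_sub_one_le_sq hb.le) hδ0]
  nlinarith

end MixLoss

section AdaHedge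

variable {K : ℕ} (l : ℕ → Fin K → ℝ)

lemma cumLoss_succ (t : ℕ) (k : Fin K) : cumLoss K l (t + 1) k = cumLoss K l t k + l t k :=
  sum_range_succ _ _

lemma ahWeight_mem_stdSimplex [NeZero K] (Δ : ℝ) (t : ℕ) :
    ahWeight K l Δ t ∈ stdSimplex ℝ (Fin K) := by
  classical
  have hZ : 0 < ∑ j : Fin K, exp (-(log K / Δ) * cumLoss K l t j) :=
    sum_pos (fun j _ => exp_pos _) univ_nonempty
  refine ⟨fun k => ?_, ?_⟩
  · unfold ahWeight
    split_ifs <;> positivity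
  · unfold ahWeight
    split_ifs with hΔ
    · rw [← sum_div, div_self hZ.ne']
    · obtain ⟨k₀, hk₀⟩ := exists_eq_ciInf_of_finite (f := cumLoss K l t)
      have hcard : (0 : ℝ) < (univ.filter fun j : Fin K =>
          cumLoss K l t j = ⨅ j', cumLoss K l t j').card := by
        exact_mod_cast card_pos.2 ⟨k₀, by simp [hk₀]⟩
      rw [sum_ite, sum_const, sum_const, smul_zero, add_zero, nsmul_eq_mul]
      field_simp

lemma iInf_le_ahHedgeLoss [NeZero K] (Δ : ℝ) (t : ℕ) : ⨅ k, l t k ≤ ahHedgeLoss K l Δ t :=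
  le_sum_mul_of_mem_stdSimplex (ahWeight_mem_stdSimplex l Δ t)
    fun k => ciInf_le (Finite.bddBelow_range _) k

lemma ahHedgeLoss_le_iSup [NeZero K] (Δ : ℝ) (t : ℕ) : ahHedgeLoss K l Δ t ≤ ⨆ k, l t k :=
  sum_mul_le_of_mem_stdSimplex (ahWeight_mem_stdSimplex l Δ t)
    fun k => le_ciSup (Finite.bddAbove_range _) k

lemma ahMixLoss_of_pos {Δ : ℝ} (hΔ : 0 < Δ) (t : ℕ) :
    ahMixLoss K l Δ t = mixLoss (ahWeight K l Δ t) (log K / Δ) (l t) := by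
  rw [ahMixLoss, if_pos hΔ, mixLoss, inv_div]

lemma ahMixLoss_le_ahHedgeLoss (hK : 1 < K) (Δ : ℝ) (t : ℕ) :
    ahMixLoss K l Δ t ≤ ahHedgeLoss K l Δ t := by
  have : NeZero K := NeZero.of_pos (by omega)
  have hw := ahWeight_mem_stdSimplex l Δ t
  by_cases hΔ : 0 < Δ
  · rw [ahMixLoss_of_pos l hΔ]
    exact mixLoss_le_sum_mul hw (div_pos (log_pos (by exact_mod_cast hK)) hΔ)
  -- at `η = ∞` the weight sits on the leaders, each of whom pays at least the mix loss
  have hlead : ∀ k, ahWeight K l Δ t k * ahMixLoss K l Δ t ≤ ahWeight K l Δ t k * l t k := by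
    intro k
    by_cases hk : cumLoss K l t k = ⨅ j, cumLoss K l t j
    · refine mul_le_mul_of_nonneg_left ?_ (hw.1 k)
      have := ciInf_le (Finite.bddBelow_range (cumLoss K l (t + 1))) k
      rw [cumLoss_succ, hk] at this
      rw [ahMixLoss, if_neg hΔ]
      linarith
    · simp [ahWeight, hΔ, hk]
  calc ahMixLoss K l Δ t = ∑ k, ahWeight K l Δ t k * ahMixLoss K l Δ t := by
        rw [← sum_mul, hw.2, one_mul]
    _ ≤ ahHedgeLoss K l Δ t := sum_le_sum fun k _ => hlead k

lemma iInf_le_ahMixLoss (hK : 1 < K) (Δ : ℝ) (t : ℕ) : ⨅ k, l t k ≤ ahMixLoss K l Δ t := by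
  have : NeZero K := NeZero.of_pos (by omega)
  by_cases hΔ : 0 < Δ
  · rw [ahMixLoss_of_pos l hΔ]
    exact le_mixLoss (ahWeight_mem_stdSimplex l Δ t)
      (div_pos (log_pos (by exact_mod_cast hK)) hΔ) fun k => ciInf_le (Finite.bddBelow_range _) k
  · have : (⨅ j, cumLoss K l t j) + ⨅ j, l t j ≤ ⨅ k, cumLoss K l (t + 1) k :=
      le_ciInf fun k => by
        rw [cumLoss_succ]
        exact add_le_add (ciInf_le (Finite.bddBelow_range _) k)
          (ciInf_le (Finite.bddBelow_range _) k)
    rw [ahMixLoss, if_neg hΔ]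
    linarith

lemma ahDelta_eq_sum (T : ℕ) :
    ahDelta K l T =
      ∑ t ∈ range T, (ahHedgeLoss K l (ahDelta K l t) t - ahMixLoss K l (ahDelta K l t) t) := by
  induction T with
  | zero => rfl
  | succ T ih => rw [sum_range_succ, ← ih, ahDelta]

lemma ahDelta_le_succ (hK : 1 < K) (t : ℕ) : ahDelta K l t ≤ ahDelta K l (t + 1) := by
  rw [ahDelta]
  linarith [ahMixLoss_le_ahHedgeLoss l hK (ahDelta K l t) t]

lemma ahDelta_nonneg (hK : 1 < K) (t : ℕ) : 0 ≤ ahDelta K l t := by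
  induction t with
  | zero => rfl
  | succ t ih => exact ih.trans (ahDelta_le_succ l hK t)

end AdaHedge

section Potential

/-- For fixed `Δ` the AdaHedge mix losses telescope in this potential. -/
noncomputable def ahPotential (K : ℕ) (l : ℕ → Fin K → ℝ) (Δ : ℝ) (t : ℕ) : ℝ :=
  if 0 < Δ then mixLoss (fun _ : Fin K => (K : ℝ)⁻¹) (log K / Δ) (cumLoss K l t)
  else ⨅ k, cumLoss K l t k

variable {K : ℕ} (l : ℕ → Fin K → ℝ)

lemma uniform_mem_stdSimplex [NeZero K] : (fun _ : Fin K => (K : ℝ)⁻¹) ∈ stdSimplex ℝ (Fin K) :=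
  ⟨fun _ => by positivity, by simp⟩

lemma ahPotential_zero [NeZero K] (Δ : ℝ) : ahPotential K l Δ 0 = 0 := by
  have h0 : cumLoss K l 0 = 0 := funext fun _ => sum_range_zero _
  unfold ahPotential
  split_ifs
  · rw [h0, mixLoss_zero uniform_mem_stdSimplex]
  · simp [h0]

lemma ahMixLoss_eq_ahPotential_sub [NeZero K] (Δ : ℝ) (t : ℕ) :
    ahMixLoss K l Δ t = ahPotential K l Δ (t + 1) - ahPotential K l Δ t := by
  by_cases hΔ : 0 < Δ
  · have hZ : ∀ s, 0 < ∑ j : Fin K, exp (-(log K / Δ) * cumLoss K l s j) :=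
      fun s => sum_pos (fun j _ => exp_pos _) univ_nonempty
    have hstep : ∑ k, ahWeight K l Δ t k * exp (-(log K / Δ) * l t k) =
        (∑ j, exp (-(log K / Δ) * cumLoss K l (t + 1) j)) /
          ∑ j, exp (-(log K / Δ) * cumLoss K l t j) := by
      rw [sum_div]
      refine sum_congr rfl fun k _ => ?_
      rw [ahWeight, if_pos hΔ, div_mul_eq_mul_div, ← exp_add, cumLoss_succ, mul_add]
    simp only [ahMixLoss_of_pos l hΔ, ahPotential, if_pos hΔ, mixLoss, ← mul_sum, hstep]
    have hK : (K : ℝ)⁻¹ ≠ 0 := inv_ne_zero (NeZero.ne _)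
    rw [log_div (hZ _).ne' (hZ _).ne', log_mul hK (hZ _).ne', log_mul hK (hZ _).ne']
    ring
  · simp only [ahMixLoss, ahPotential, if_neg hΔ]

lemma ahPotential_mono (hK : 1 < K) {Δ Δ' : ℝ} (hΔ : 0 ≤ Δ) (hΔΔ' : Δ ≤ Δ') (t : ℕ) :
    ahPotential K l Δ t ≤ ahPotential K l Δ' t := by
  have : NeZero K := NeZero.of_pos (by omega)
  have hlogK : 0 < log K := log_pos (by exact_mod_cast hK)
  rcases hΔ.eq_or_lt with rfl | hΔ
  · rcases hΔΔ'.eq_or_lt with rfl | hΔ'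
    · rfl
    rw [ahPotential, ahPotential, if_neg (lt_irrefl 0), if_pos hΔ']
    exact le_mixLoss uniform_mem_stdSimplex (div_pos hlogK hΔ')
      fun k => ciInf_le (Finite.bddBelow_range _) k
  · rw [ahPotential, ahPotential, if_pos hΔ, if_pos (hΔ.trans_le hΔΔ')]
    exact mixLoss_antitone uniform_mem_stdSimplex (div_pos hlogK (hΔ.trans_le hΔΔ'))
      (div_le_div_of_nonneg_left hlogK.le hΔ hΔΔ')

lemma ahPotential_le_iInf_add (hK : 1 < K) {Δ : ℝ} (hΔ : 0 ≤ Δ) (t : ℕ) :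
    ahPotential K l Δ t ≤ (⨅ k, cumLoss K l t k) + Δ := by
  have : NeZero K := NeZero.of_pos (by omega)
  have hlogK : 0 < log K := log_pos (by exact_mod_cast hK)
  rcases hΔ.eq_or_lt with rfl | hΔ
  · simp [ahPotential]
  obtain ⟨k₀, hk₀⟩ := exists_eq_ciInf_of_finite (f := cumLoss K l t)
  rw [ahPotential, if_pos hΔ, ← hk₀]
  convert mixLoss_le_sub_log_div uniform_mem_stdSimplex (div_pos hlogK hΔ)
    (x := cumLoss K l t) (inv_pos.2 (by exact_mod_cast NeZero.pos K : (0 : ℝ) < K)) using 1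
  rw [log_inv, neg_div, sub_neg_eq_add, div_div_cancel₀ hlogK.ne']

lemma sum_ahMixLoss_le_ahPotential (hK : 1 < K) (T : ℕ) :
    ∑ t ∈ range T, ahMixLoss K l (ahDelta K l t) t ≤ ahPotential K l (ahDelta K l T) T := by
  have : NeZero K := NeZero.of_pos (by omega)
  induction T with
  | zero => rw [sum_range_zero, ahPotential_zero]
  | succ T ih =>
    rw [sum_range_succ, ahMixLoss_eq_ahPotential_sub]
    linarith [ahPotential_mono l hK (ahDelta_nonneg l hK T) (ahDelta_le_succ l hK T) (T + 1)]

lemma sum_ahMixLoss_le (hK : 1 < K) (T : ℕ) :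
    ∑ t ∈ range T, ahMixLoss K l (ahDelta K l t) t ≤ (⨅ k, cumLoss K l T k) + ahDelta K l T :=
  (sum_ahMixLoss_le_ahPotential l hK T).trans
    (ahPotential_le_iInf_add l hK (ahDelta_nonneg l hK T) T)

end Potential

section Regret

noncomputable def ahVariance (K : ℕ) (l : ℕ → Fin K → ℝ) (Δ : ℝ) (t : ℕ) : ℝ :=
  ∑ k, ahWeight K l Δ t k * (l t k - ahHedgeLoss K l Δ t) ^ 2

variable {K : ℕ} (l : ℕ → Fin K → ℝ)

lemma ahVariance_nonneg [NeZero K] (Δ : ℝ) (t : ℕ) : 0 ≤ ahVariance K l Δ t :=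
  sum_nonneg fun k _ => mul_nonneg ((ahWeight_mem_stdSimplex l Δ t).1 k) (sq_nonneg _)

lemma ahVariance_le [NeZero K] (Δ : ℝ) (t : ℕ) :
    ahVariance K l Δ t ≤
      ((⨆ k, l t k) - ahHedgeLoss K l Δ t) * (ahHedgeLoss K l Δ t - ⨅ k, l t k) :=
  sum_mul_sub_sq_le (ahWeight_mem_stdSimplex l Δ t) (fun k => ciInf_le (Finite.bddBelow_range _) k)
    fun k => le_ciSup (Finite.bddAbove_range _) k

lemma ahDelta_succ_sq_le (hK : 1 < K) (t : ℕ) :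
    ahDelta K l (t + 1) ^ 2 ≤ ahDelta K l t ^ 2 + log K * ahVariance K l (ahDelta K l t) t +
      (2 / 3 * log K + 1) * ((⨆ k, l t k) - ⨅ k, l t k) *
        (ahHedgeLoss K l (ahDelta K l t) t - ahMixLoss K l (ahDelta K l t) t) := by
  have : NeZero K := NeZero.of_pos (by omega)
  have hlogK : 0 < log K := log_pos (by exact_mod_cast hK)
  set Δ := ahDelta K l t
  set δ := ahHedgeLoss K l Δ t - ahMixLoss K l Δ t
  set s := (⨆ k, l t k) - ⨅ k, l t k
  have hδ0 : 0 ≤ δ := sub_nonneg.2 (ahMixLoss_le_ahHedgeLoss l hK Δ t)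
  have hδs : δ ≤ s := by linarith [ahHedgeLoss_le_iSup l Δ t, iInf_le_ahMixLoss l hK Δ t]
  have hv0 := ahVariance_nonneg l Δ t
  have hcross : 2 * Δ * δ ≤ log K * (ahVariance K l Δ t + 2 / 3 * s * δ) := by
    rcases (show 0 ≤ Δ from ahDelta_nonneg l hK t).eq_or_lt with hΔ | hΔ
    · rw [show 2 * Δ * δ = 0 by rw [← hΔ]; ring]
      exact mul_nonneg hlogK.le
        (add_nonneg hv0 (mul_nonneg (mul_nonneg (by norm_num) (hδ0.trans hδs)) hδ0))
    have hgap : 2 * δ ≤ log K / Δ * (ahVariance K l Δ t + 2 / 3 * s * δ) := by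
      have := two_mul_sub_mixLoss_le (ahWeight_mem_stdSimplex l Δ t) (div_pos hlogK hΔ)
        (a := ⨅ k, l t k) (s := s) (fun k => ciInf_le (Finite.bddBelow_range _) k)
        fun k => by linarith [le_ciSup (Finite.bddAbove_range (l t)) k]
      rw [← ahMixLoss_of_pos l hΔ] at this
      exact this
    calc 2 * Δ * δ = Δ * (2 * δ) := by ring
      _ ≤ Δ * (log K / Δ * (ahVariance K l Δ t + 2 / 3 * s * δ)) :=
        mul_le_mul_of_nonneg_left hgap hΔ.le
      _ = log K * (ahVariance K l Δ t + 2 / 3 * s * δ) := by field_simp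
  have hsucc : ahDelta K l (t + 1) = Δ + δ := rfl
  rw [hsucc]
  nlinarith

lemma ahDelta_sq_le (hK : 1 < K) {T : ℕ} {S : ℝ}
    (hS : ∀ t ∈ range T, (⨆ k, l t k) - ⨅ k, l t k ≤ S) :
    ahDelta K l T ^ 2 ≤ log K * ∑ t ∈ range T, ahVariance K l (ahDelta K l t) t +
      (2 / 3 * log K + 1) * S * ahDelta K l T := by
  induction T with
  | zero => simp [ahDelta]
  | succ T ih =>
    have hlogK : 0 < log K := log_pos (by exact_mod_cast hK)
    have hδ0 := sub_nonneg.2 (ahMixLoss_le_ahHedgeLoss l hK (ahDelta K l T) T)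
    have hsT := mul_le_mul_of_nonneg_right (mul_le_mul_of_nonneg_left
      (hS T (self_mem_range_succ T)) (by positivity : 0 ≤ 2 / 3 * log K + 1)) hδ0
    have ih := ih fun t ht => hS t (range_mono (Nat.le_succ T) ht)
    have hsucc := ahDelta_succ_sq_le l hK T
    have hstep : ahDelta K l (T + 1) = ahDelta K l T +
        (ahHedgeLoss K l (ahDelta K l T) T - ahMixLoss K l (ahDelta K l T) T) := rfl
    rw [hstep] at hsucc ⊢
    rw [sum_range_succ]
    nlinarith

lemma sum_ahVariance_le [NeZero K] {T : ℕ} {H Lplus Lminus S : ℝ}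
    (hH : H = ∑ t ∈ range T, ahHedgeLoss K l (ahDelta K l t) t)
    (hLplus : Lplus = ∑ t ∈ range T, ⨆ k, l t k)
    (hLminus : Lminus = ∑ t ∈ range T, ⨅ k, l t k)
    (hS0 : 0 ≤ S) (hS : ∀ t ∈ range T, (⨆ k, l t k) - ⨅ k, l t k ≤ S) :
    ∑ t ∈ range T, ahVariance K l (ahDelta K l t) t ≤
      S * ((H - Lminus) * (Lplus - H) / (Lplus - Lminus)) := by
  set a := fun t => ahHedgeLoss K l (ahDelta K l t) t - ⨅ k, l t k
  set c := fun t => (⨆ k, l t k) - ⨅ k, l t k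
  have ha : ∀ t ∈ range T, 0 ≤ a t := fun t _ => sub_nonneg.2 (iInf_le_ahHedgeLoss l _ t)
  have hac : ∀ t ∈ range T, a t ≤ c t := fun t _ => sub_le_sub_right (ahHedgeLoss_le_iSup l _ t) _
  have hA : ∑ t ∈ range T, a t = H - Lminus := by rw [sum_sub_distrib, hH, hLminus]
  have hC : ∑ t ∈ range T, c t = Lplus - Lminus := by rw [sum_sub_distrib, hLplus, hLminus]
  calc ∑ t ∈ range T, ahVariance K l (ahDelta K l t) t
      ≤ ∑ t ∈ range T, a t * (c t - a t) :=
        sum_le_sum fun t _ => (ahVariance_le l _ t).trans_eq (by ring)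
    _ ≤ ∑ t ∈ range T, S * (a t * (c t - a t) / c t) :=
        sum_le_sum fun t ht => mul_sub_le_mul_div (ha t ht) (hac t ht) (hS t ht)
    _ ≤ S * ((∑ t ∈ range T, a t) * (∑ t ∈ range T, c t - ∑ t ∈ range T, a t) /
          ∑ t ∈ range T, c t) := by
        rw [← mul_sum]; exact mul_le_mul_of_nonneg_left (sum_mul_sub_div_le _ ha hac) hS0
    _ = S * ((H - Lminus) * (Lplus - H) / (Lplus - Lminus)) := by rw [hA, hC]; ring

theorem sum_ahHedgeLoss_le (hK : 1 < K) {T : ℕ} {H Lstar Lplus Lminus S : ℝ}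
    (hH : H = ∑ t ∈ range T, ahHedgeLoss K l (ahDelta K l t) t)
    (hLstar : Lstar = ⨅ k, cumLoss K l T k)
    (hLplus : Lplus = ∑ t ∈ range T, ⨆ k, l t k)
    (hLminus : Lminus = ∑ t ∈ range T, ⨅ k, l t k)
    (hS0 : 0 ≤ S) (hS : ∀ t ∈ range T, (⨆ k, l t k) - ⨅ k, l t k ≤ S) :
    H ≤ Lstar + 2 * √(S * log K * ((Lplus - Lstar) * (Lstar - Lminus) / (Lplus - Lminus))) +
      S * (16 / 3 * log K + 2) := by
  have : NeZero K := NeZero.of_pos (by omega)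
  have hlogK : 0 < log K := log_pos (by exact_mod_cast hK)
  set D := ahDelta K l T
  have hD0 : 0 ≤ D := ahDelta_nonneg l hK T
  have hHD : H ≤ Lstar + 2 * D := by
    have := ahDelta_eq_sum l T
    rw [sum_sub_distrib, ← hH] at this
    linarith [sum_ahMixLoss_le l hK T]
  have hLminus_le : Lminus ≤ Lstar := hLminus ▸ hLstar ▸
    le_ciInf fun k => sum_le_sum fun t _ => ciInf_le (Finite.bddBelow_range _) k
  have hLstar_le : Lstar ≤ Lplus := hLplus ▸ hLstar ▸
    (ciInf_le (Finite.bddBelow_range _) 0).trans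
      (sum_le_sum fun t _ => le_ciSup (Finite.bddAbove_range (l t)) 0)
  set B := (Lplus - Lstar) * (Lstar - Lminus) / (Lplus - Lminus)
  have hB0 : 0 ≤ B := div_nonneg (mul_nonneg (by linarith) (by linarith)) (by linarith)
  have hsqrt := sqrt_nonneg (S * log K * B)
  rcases le_or_gt H Lstar with hle | hlt
  · nlinarith
  have hV : ∑ t ∈ range T, ahVariance K l (ahDelta K l t) t ≤ S * (B + 2 * D) :=
    (sum_ahVariance_le l hH hLplus hLminus hS0 hS).trans (mul_le_mul_of_nonneg_left
      ((sub_mul_sub_div_le (hLminus_le.trans hLstar_le) hLminus_le hlt.le).trans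
        (by linarith)) hS0)
  have hquad : D ^ 2 ≤ √(S * log K * B) ^ 2 + (8 / 3 * log K + 1) * S * D := by
    rw [sq_sqrt (by positivity)]
    nlinarith [ahDelta_sq_le l hK hS, mul_le_mul_of_nonneg_left hV hlogK.le]
  nlinarith [le_add_of_sq_le_sq_add_mul hsqrt (by positivity) hquad]

end Regret

/-- Markov's inequality for the weighted vote `∑ₖ wₖ 1_{Cₖ}`. -/
lemma measureReal_weightedMajority_le {α ι : Type*} [MeasurableSpace α] {μ : Measure α}
    [Fintype ι] {w : ι → ℝ} (hw : ∀ k, 0 ≤ w k) {C : ι → Set α}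
    (hC : ∀ k, MeasurableSet (C k)) (hCfin : ∀ k, μ (C k) ≠ ⊤) :
    μ.real {y | (1 : ℝ) / 2 < ∑ k, w k * (C k).indicator (1 : α → ℝ) y} ≤
      2 * ∑ k, w k * μ.real (C k) := by
  have hint : ∀ k, Integrable ((C k).indicator (1 : α → ℝ)) μ := fun k =>
    (integrable_indicator_iff (hC k)).2 (integrableOn_const (hCfin k))
  have hg : Integrable (fun y => ∑ k, w k * (C k).indicator (1 : α → ℝ) y) μ :=
    integrable_finsetSum _ fun k _ => (hint k).const_mul (w k)
  have hmarkov := mul_meas_ge_le_integral_of_nonneg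
    (f := fun y => ∑ k, w k * (C k).indicator (1 : α → ℝ) y) (Filter.Eventually.of_forall fun y =>
    sum_nonneg fun k _ => mul_nonneg (hw k) (Set.indicator_nonneg (fun _ _ => zero_le_one) y))
    hg (1 / 2)
  rw [integral_finsetSum _ fun k _ => (hint k).const_mul (w k)] at hmarkov
  simp only [integral_const_mul, integral_indicator_one (hC _)] at hmarkov
  have hmono : μ.real {y | (1 : ℝ) / 2 < ∑ k, w k * (C k).indicator (1 : α → ℝ) y} ≤
      μ.real {y | (1 : ℝ) / 2 ≤ ∑ k, w k * (C k).indicator (1 : α → ℝ) y} :=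
    measureReal_mono (Set.ofPred_subset_ofPred.2 fun _ => le_of_lt)
      (hg.measure_ge_lt_top (by norm_num)).ne
  linarith

/-- **Proposition 2** (total Lebesgue measure of AdaHedge-weighted majority vote
sets): running AdaHedge with the losses `ℓ_k^{(t)} = λ(C_k^{(t)})` given by the
Lebesgue measures of the sets, the total Lebesgue measure `L_M^{(T)}` of the
weighted majority vote sets
`C^{(t)} = {y : ∑ k, w_k^{(t)}·1{y ∈ C_k^{(t)}} > 1/2}` satisfies
`L_M ≤ 2 L_* + 4·√(S·ln K·(L_+ − L_*)(L_* − L_−)/(L_+ − L_−)) + 2 S·((16/3)·ln K + 2)`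
(the fraction being `0` when `L_+ = L_−`, as is Lean's division convention). -/
theorem adahedge_majority_vote_total_length_bound
    (K T : ℕ) (hK : 2 ≤ K) (hT : 1 ≤ T)
    (C : ℕ → Fin K → Set ℝ)
    (hCmeas : ∀ t k, MeasurableSet (C t k))
    (hCfin : ∀ t k, MeasureTheory.volume (C t k) ≠ ⊤)
    (l : ℕ → Fin K → ℝ)
    (hl : ∀ t k, l t k = (MeasureTheory.volume (C t k)).toReal)
    (LM Lstar Lplus Lminus S : ℝ)
    (hLM : LM = ∑ t ∈ Finset.range T,
      (MeasureTheory.volume {y : ℝ | (1 : ℝ) / 2 <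
        ∑ k, ahWeight K l (ahDelta K l t) t k * (C t k).indicator (1 : ℝ → ℝ) y}).toReal)
    (hLstar : Lstar = ⨅ k, cumLoss K l T k)
    (hLplus : Lplus = ∑ t ∈ Finset.range T, ⨆ k, l t k)
    (hLminus : Lminus = ∑ t ∈ Finset.range T, ⨅ k, l t k)
    (hS : S = (Finset.range T).sup'
        (Finset.nonempty_range_iff.mpr (by omega))
        (fun t => (⨆ k, l t k) - ⨅ k, l t k)) :
    LM ≤ 2 * Lstar +
      4 * Real.sqrt (S * Real.log K *
        ((Lplus - Lstar) * (Lstar - Lminus) / (Lplus - Lminus))) +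
      2 * S * (16 / 3 * Real.log K + 2) := by
  have : NeZero K := NeZero.of_pos (by omega)
  have hS_ge : ∀ t ∈ range T, (⨆ k, l t k) - ⨅ k, l t k ≤ S := fun t ht =>
    hS ▸ le_sup' (fun t => (⨆ k, l t k) - ⨅ k, l t k) ht
  have hS0 : 0 ≤ S := (sub_nonneg.2 (ciInf_le_ciSup (Finite.bddBelow_range (l 0))
    (Finite.bddAbove_range _))).trans (hS_ge 0 (mem_range.2 (by omega)))
  have hLM_le : LM ≤ 2 * ∑ t ∈ range T, ahHedgeLoss K l (ahDelta K l t) t := by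
    rw [hLM, mul_sum]
    refine sum_le_sum fun t _ => ?_
    simpa only [ahHedgeLoss, hl, measureReal_def] using measureReal_weightedMajority_le
      (ahWeight_mem_stdSimplex l (ahDelta K l t) t).1 (hCmeas t) (hCfin t)
  have := sum_ahHedgeLoss_le l hK rfl hLstar hLplus hLminus hS0 hS_ge
  linarith
end

section
/- Invariance of AdaHedge weights under per-round affine transformations of the losses: Let K ≥ 2, let a > 0, and for each round t let b^{(t)} ∈ ℝ. Let ℓ_k^{(t)} ≥ 0 be expert losses and define transformed losses ℓ'_k^{(t)} = a·ℓ_k^{(t)} + b^{(t)}, assumed nonnegative. Then for every round t, the AdaHedge weight vector computed from the losses (ℓ'_k^{(s)})_{s<t} equals the AdaHedge weight vector computed from the losses (ℓ_k^{(s)})_{s<t}; that is, the sequence of AdaHedge weights is unchanged when the loss vectors are multiplied by a positive constant and/or a round-dependent constant is added to all experts' losses in that round. -/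
open Finset

lemma inf_affine {K : ℕ} (hK : 0 < K) (a c : ℝ) (ha : 0 < a) (f : Fin K → ℝ) :
    (⨅ k, (a * f k + c)) = a * (⨅ k, f k) + c := by
  haveI : Nonempty (Fin K) := Fin.pos_iff_nonempty.mp hK
  obtain ⟨k0, hk0⟩ := Finite.exists_min f
  have hinf : (⨅ k, f k) = f k0 :=
    le_antisymm (ciInf_le (Finite.bddBelow_range f) k0) (le_ciInf hk0)
  apply le_antisymm
  · calc (⨅ k, (a * f k + c)) ≤ a * f k0 + c := ciInf_le (Finite.bddBelow_range _) k0
      _ = a * (⨅ k, f k) + c := by rw [hinf]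
  · refine le_ciInf fun k => ?_
    have h1 : (⨅ k, f k) ≤ f k := ciInf_le (Finite.bddBelow_range f) k
    nlinarith

lemma ahWeight_nonneg (K : ℕ) (l : ℕ → Fin K → ℝ) (Δ : ℝ) (t : ℕ) (k : Fin K) :
    0 ≤ ahWeight K l Δ t k := by
  unfold ahWeight
  split_ifs with h1 h2
  · positivity
  · positivity
  · exact le_refl _

lemma ahWeight_sum_one (K : ℕ) (hK : 0 < K) (l : ℕ → Fin K → ℝ) (Δ : ℝ) (t : ℕ) :
    ∑ k : Fin K, ahWeight K l Δ t k = 1 := by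
  classical
  haveI : Nonempty (Fin K) := Fin.pos_iff_nonempty.mp hK
  unfold ahWeight
  by_cases h : 0 < Δ
  · simp only [if_pos h]
    rw [← Finset.sum_div]
    apply div_self
    have : 0 < ∑ j : Fin K, Real.exp (-(Real.log K / Δ) * cumLoss K l t j) :=
      Finset.sum_pos (fun j _ => Real.exp_pos _) ⟨Classical.arbitrary _, Finset.mem_univ _⟩
    exact this.ne'
  · simp only [if_neg h]
    rw [← Finset.sum_filter]
    rw [Finset.sum_const, nsmul_eq_mul, mul_one_div, div_self]
    have hne : (Finset.univ.filter fun j : Fin K =>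
        cumLoss K l t j = ⨅ j', cumLoss K l t j').Nonempty := by
      obtain ⟨k0, hk0⟩ := Finite.exists_min (cumLoss K l t)
      refine ⟨k0, Finset.mem_filter.mpr ⟨Finset.mem_univ _, ?_⟩⟩
      exact le_antisymm (le_ciInf hk0) (ciInf_le (Finite.bddBelow_range _) k0)
    exact_mod_cast (Nat.cast_pos.mpr (Finset.card_pos.mpr hne)).ne'

lemma ahWeight_affine (K : ℕ) (hK : 0 < K) (a B Δ : ℝ) (ha : 0 < a)
    (l l' : ℕ → Fin K → ℝ) (t : ℕ)
    (hcum : ∀ k, cumLoss K l' t k = a * cumLoss K l t k + B) (k : Fin K) :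
    ahWeight K l' (a * Δ) t k = ahWeight K l Δ t k := by
  classical
  by_cases hΔ : 0 < Δ
  · have haΔ : 0 < a * Δ := mul_pos ha hΔ
    simp only [ahWeight, if_pos hΔ, if_pos haΔ]
    have key : ∀ j, Real.exp (-(Real.log K / (a * Δ)) * cumLoss K l' t j)
        = Real.exp (-(Real.log K / Δ) * cumLoss K l t j) *
          Real.exp (-(Real.log K / (a * Δ)) * B) := by
      intro j
      rw [hcum, ← Real.exp_add]
      congr 1
      field_simp
      ring
    simp only [key, ← Finset.sum_mul]
    rw [mul_div_mul_right _ _ (Real.exp_ne_zero _)]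
  · have haΔ : ¬ 0 < a * Δ := by intro h; exact hΔ (by nlinarith)
    have hinf : (⨅ j, cumLoss K l' t j) = a * (⨅ j, cumLoss K l t j) + B := by
      simp only [hcum]; exact inf_affine hK a B ha _
    have hcond : ∀ j, (cumLoss K l' t j = ⨅ j', cumLoss K l' t j') ↔
        (cumLoss K l t j = ⨅ j', cumLoss K l t j') := by
      intro j
      rw [hcum j, hinf]
      constructor
      · intro h
        exact mul_left_cancel₀ ha.ne' (by linarith)
      · intro h; rw [h]
    have hfilter : (Finset.univ.filter fun j : Fin K =>
        cumLoss K l' t j = ⨅ j', cumLoss K l' t j') =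
        (Finset.univ.filter fun j : Fin K => cumLoss K l t j = ⨅ j', cumLoss K l t j') :=
      Finset.filter_congr fun j _ => by simp only [hcond j]
    simp only [ahWeight, if_neg hΔ, if_neg haΔ, hfilter]
    by_cases hk : cumLoss K l t k = ⨅ j', cumLoss K l t j'
    · rw [if_pos ((hcond k).mpr hk), if_pos hk]
    · rw [if_neg (fun h => hk ((hcond k).mp h)), if_neg hk]

lemma cumLoss_affine (K : ℕ) (a : ℝ) (b : ℕ → ℝ) (l l' : ℕ → Fin K → ℝ)
    (htrans : ∀ t k, l' t k = a * l t k + b t) (t : ℕ) (k : Fin K) :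
    cumLoss K l' t k = a * cumLoss K l t k + ∑ s ∈ Finset.range t, b s := by
  simp only [cumLoss, htrans, Finset.sum_add_distrib, Finset.mul_sum]

lemma ahDelta_affine (K : ℕ) (hK : 2 ≤ K) (a : ℝ) (ha : 0 < a) (b : ℕ → ℝ)
    (l l' : ℕ → Fin K → ℝ) (htrans : ∀ t k, l' t k = a * l t k + b t) :
    ∀ t, ahDelta K l' t = a * ahDelta K l t := by
  have hK0 : 0 < K := by omega
  have hlogK : 0 < Real.log K := Real.log_pos (by exact_mod_cast hK)
  haveI : Nonempty (Fin K) := Fin.pos_iff_nonempty.mp hK0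
  intro t
  induction t with
  | zero => simp [ahDelta]
  | succ t ih =>
    set Δ := ahDelta K l t with hΔdef
    have hcum : ∀ s k, cumLoss K l' s k = a * cumLoss K l s k + ∑ u ∈ Finset.range s, b u :=
      cumLoss_affine K a b l l' htrans
    have hw : ∀ k, ahWeight K l' (ahDelta K l' t) t k = ahWeight K l Δ t k := by
      intro k
      rw [ih]
      exact ahWeight_affine K hK0 a _ Δ ha l l' t (hcum t) k
    have hsum1 : ∑ k : Fin K, ahWeight K l Δ t k = 1 := ahWeight_sum_one K hK0 l Δ t
    have hh : ahHedgeLoss K l' (ahDelta K l' t) t = a * ahHedgeLoss K l Δ t + b t := by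
      unfold ahHedgeLoss
      calc ∑ k : Fin K, ahWeight K l' (ahDelta K l' t) t k * l' t k
          = ∑ k : Fin K, (a * (ahWeight K l Δ t k * l t k) + b t * ahWeight K l Δ t k) := by
            refine Finset.sum_congr rfl fun k _ => ?_
            rw [hw k, htrans]; ring
        _ = a * ∑ k : Fin K, ahWeight K l Δ t k * l t k
              + b t * ∑ k : Fin K, ahWeight K l Δ t k := by
            rw [Finset.sum_add_distrib, ← Finset.mul_sum, ← Finset.mul_sum]
        _ = a * ∑ k : Fin K, ahWeight K l Δ t k * l t k + b t := by rw [hsum1, mul_one]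
    have hm : ahMixLoss K l' (ahDelta K l' t) t = a * ahMixLoss K l Δ t + b t := by
      by_cases hΔ : 0 < Δ
      · have haΔ : 0 < a * Δ := mul_pos ha hΔ
        rw [ih]
        unfold ahMixLoss
        rw [if_pos hΔ, if_pos haΔ]
        have key : ∀ j, Real.exp (-(Real.log K / (a * Δ)) * l' t j)
            = Real.exp (-(Real.log K / Δ) * l t j) *
              Real.exp (-(Real.log K / (a * Δ)) * b t) := by
          intro j
          rw [htrans, ← Real.exp_add]
          congr 1
          field_simp
          ring
        have hw' : ∀ k, ahWeight K l' (a * Δ) t k = ahWeight K l Δ t k := fun k =>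
          ahWeight_affine K hK0 a _ Δ ha l l' t (hcum t) k
        have hS : 0 < ∑ k : Fin K, ahWeight K l Δ t k * Real.exp (-(Real.log K / Δ) * l t k) := by
          obtain ⟨k0, -, hk0⟩ := Finset.exists_lt_of_sum_lt
            (by rw [hsum1, Finset.sum_const_zero]; norm_num :
              ∑ k : Fin K, (0 : ℝ) < ∑ k : Fin K, ahWeight K l Δ t k)
          refine Finset.sum_pos' (fun k _ => ?_) ⟨k0, Finset.mem_univ _, ?_⟩
          · exact mul_nonneg (ahWeight_nonneg K l Δ t k) (Real.exp_pos _).le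
          · exact mul_pos hk0 (Real.exp_pos _)
        have hrw : (∑ k : Fin K, ahWeight K l' (a * Δ) t k * Real.exp (-(Real.log K / (a * Δ)) * l' t k))
            = (∑ k : Fin K, ahWeight K l Δ t k * Real.exp (-(Real.log K / Δ) * l t k)) *
              Real.exp (-(Real.log K / (a * Δ)) * b t) := by
          rw [Finset.sum_mul]
          refine Finset.sum_congr rfl fun k _ => ?_
          rw [hw' k, key k]; ring
        rw [hrw, Real.log_mul hS.ne' (Real.exp_ne_zero _), Real.log_exp]
        field_simp
        ring
      · have haΔ : ¬ 0 < a * Δ := by intro h; exact hΔ (by nlinarith)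
        rw [ih]
        unfold ahMixLoss
        rw [if_neg hΔ, if_neg haΔ]
        have h1 : (⨅ k, cumLoss K l' (t + 1) k)
            = a * (⨅ k, cumLoss K l (t + 1) k) + ∑ u ∈ Finset.range (t + 1), b u := by
          simp only [hcum]; exact inf_affine hK0 a _ ha _
        have h2 : (⨅ k, cumLoss K l' t k)
            = a * (⨅ k, cumLoss K l t k) + ∑ u ∈ Finset.range t, b u := by
          simp only [hcum]; exact inf_affine hK0 a _ ha _
        rw [h1, h2, Finset.sum_range_succ]
        ring
    show ahDelta K l' t + (ahHedgeLoss K l' (ahDelta K l' t) t - ahMixLoss K l' (ahDelta K l' t) t)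
        = a * (Δ + (ahHedgeLoss K l Δ t - ahMixLoss K l Δ t))
    rw [ih] at hh hm ⊢
    rw [hh, hm]
    ring

/-- Invariance of AdaHedge weights under per-round affine transformations of the
losses: if `ℓ'_k^{(t)} = a·ℓ_k^{(t)} + b^{(t)}` with `a > 0` and both loss
sequences nonnegative, then in every round the AdaHedge weight vector computed
from the transformed losses equals the one computed from the original losses. -/
theorem adahedge_weights_affine_invariant
    (K : ℕ) (hK : 2 ≤ K) (a : ℝ) (ha : 0 < a) (b : ℕ → ℝ)
    (l l' : ℕ → Fin K → ℝ)
    (hl : ∀ t k, 0 ≤ l t k) (hl' : ∀ t k, 0 ≤ l' t k)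
    (htrans : ∀ t k, l' t k = a * l t k + b t) :
    ∀ t k, ahWeight K l' (ahDelta K l' t) t k = ahWeight K l (ahDelta K l t) t k := by
  have hK0 : 0 < K := by omega
  intro t k
  rw [ahDelta_affine K hK a ha b l l' htrans t]
  exact ahWeight_affine K hK0 a _ _ ha l l' t
    (cumLoss_affine K a b l l' htrans t) k
end
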